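/- arXiv:0912.0855 — 6 statements merged into one kernel-verified Lean document; each statement's English description precedes it below -/
import Mathlib

section
/- Let V be a finite-dimensional vector space over a field K and let k ≥ 2 be an even integer. Then for any endomorphisms X_1, …, X_k of V, the alternating trace sum ∑_{σ ∈ S_k} sgn(σ) · trace(X_{σ(1)} ∘ X_{σ(2)} ∘ ⋯ ∘ X_{σ(k)}) equals 0. -/
/-!
Let `c` be the cyclic rotation of `Fin k`. Precomposing with `c` rotates the word
`X_{σ(1)} ⋯ X_{σ(k)}` by one letter, which does not change its trace, while for even `k` it
flips the sign of the permutation. So `σ ↦ σ c` is a bijection from even to odd permutations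
along which the trace term is constant, and the signed sum cancels, in every characteristic.
-/

open Equiv Finset

theorem List.ofFn_comp_finRotate {α : Type*} {n : ℕ} (f : Fin (n + 1) → α) :
    List.ofFn (f ∘ finRotate (n + 1)) = (List.ofFn f).rotate 1 := by
  have h : f ∘ finRotate (n + 1) = Fin.snoc (α := fun _ => α) (Fin.tail f) (f 0) := by
    rw [Fin.snoc_eq_cons_rotate, Fin.cons_self_tail]; rfl
  rw [h, List.ofFn_succ', List.ofFn_succ (f := f)]
  simp [Fin.tail]

theorem LinearMap.trace_prod_rotate_one {R M : Type*} [CommRing R] [AddCommGroup M]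
    [Module R M] [Module.Free R M] [Module.Finite R M] (l : List (Module.End R M)) :
    trace R M (l.rotate 1).prod = trace R M l.prod := by
  cases l with
  | nil => rfl
  | cons f l => simpa using trace_mul_comm R l.prod f

theorem Equiv.Perm.sum_sign_smul_eq_zero_of_mul_right_invariant {α M : Type*} [Fintype α]
    [DecidableEq α] [AddCommGroup M] (t : Perm α → M) {c : Perm α} (hc : Perm.sign c = -1)
    (ht : ∀ σ, t (σ * c) = t σ) :
    ∑ σ, (Perm.sign σ : ℤ) • t σ = 0 := by
  have hodd : ∀ σ : Perm α, Perm.sign σ ≠ 1 ↔ Perm.sign σ = -1 :=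
    fun _ => Int.units_ne_iff_eq_neg
  have h_even : ∑ σ ∈ univ with Perm.sign σ = 1, (Perm.sign σ : ℤ) • t σ
      = ∑ σ ∈ univ with Perm.sign σ = 1, t σ :=
    sum_congr rfl fun σ hσ => by simp [(mem_filter.1 hσ).2]
  have h_odd : ∑ σ ∈ univ with Perm.sign σ ≠ 1, (Perm.sign σ : ℤ) • t σ
      = -∑ σ ∈ univ with Perm.sign σ ≠ 1, t σ := by
    rw [← sum_neg_distrib]
    exact sum_congr rfl fun σ hσ => by simp [(hodd σ).1 (mem_filter.1 hσ).2]
  have h_shift : ∑ σ ∈ univ with Perm.sign σ ≠ 1, t σ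
      = ∑ σ ∈ univ with Perm.sign σ = 1, t σ :=
    sum_nbij' (· * c⁻¹) (· * c) (by simp [hc, hodd, neg_eq_iff_eq_neg])
      (by simp [hc, hodd, neg_eq_iff_eq_neg])
      (by simp) (by simp) (fun σ _ => by rw [← ht (σ * c⁻¹), inv_mul_cancel_right])
  rw [← sum_filter_add_sum_filter_not univ (fun σ => Perm.sign σ = 1), h_even, h_odd, h_shift,
    add_neg_cancel]

/-- For endomorphisms `X_1, …, X_k` of a finite-dimensional vector space `V` over a field `K`,
with `k ≥ 2` even, the alternating trace sum
`∑_{σ ∈ S_k} sgn(σ) · trace (X_{σ(1)} ∘ ⋯ ∘ X_{σ(k)})` vanishes. -/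
theorem stmt_1 {K V : Type*} [Field K] [AddCommGroup V] [Module K V]
    [FiniteDimensional K V] (k : ℕ) (hk : Even k) (hk2 : 2 ≤ k)
    (X : Fin k → Module.End K V) :
    ∑ σ : Equiv.Perm (Fin k),
      ((Equiv.Perm.sign σ : ℤ) : K) *
        LinearMap.trace K V ((List.ofFn fun i => X (σ i)).prod) = 0 := by
  obtain ⟨m, rfl⟩ : ∃ m, k = m + 1 := ⟨k - 1, by omega⟩
  have hm : Odd m := by simpa [Nat.even_add_one] using hk
  have h_sign : Perm.sign (finRotate (m + 1)) = -1 := by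
    rw [sign_finRotate, Nat.add_sub_cancel, hm.neg_one_pow]
  simp_rw [← zsmul_eq_mul]
  refine Perm.sum_sign_smul_eq_zero_of_mul_right_invariant _ h_sign fun σ => ?_
  change LinearMap.trace K V (List.ofFn ((fun i => X (σ i)) ∘ finRotate (m + 1))).prod = _
  rw [List.ofFn_comp_finRotate, LinearMap.trace_prod_rotate_one]
end

section
/- Let U ⊆ ℝⁿ be open and let ε : U × U → GL(n,ℝ) be a smooth map satisfying the cocycle conditions ε(x,x) = I and ε(y,z) · ε(x,y) = ε(x,z) for all x, y, z ∈ U. For p, x ∈ U define the matrix-valued functions Γ̄^i_{jk}(p,x) := ∑_b (∂ε^i_b(p,x)/∂x^j) · ε^b_k(x,p) and Γ^i_{jk}(x) := [∂ε^i_k(x,y)/∂y^j]_{y=x}. Then Γ̄ is independent of the base point: Γ̄^i_{jk}(p,x) = Γ̄^i_{jk}(q,x) for all p, q, x ∈ U, and Γ̄^i_{jk}(p,x) = Γ^i_{jk}(x) for all p, x ∈ U. -/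
/-- The Christoffel symbols `Γ^i_{jk}(x) = [∂ε^i_k(x,y)/∂y^j]_{y=x}` of a splitting `ε`. -/
noncomputable def Gamma {n : ℕ}
    (ε : (Fin n → ℝ) → (Fin n → ℝ) → Matrix (Fin n) (Fin n) ℝ)
    (x : Fin n → ℝ) (i j k : Fin n) : ℝ :=
  fderiv ℝ (fun y => ε x y i k) x (Pi.single j 1)

/-- `Γ̄^i_{jk}(p,x) = ∑_b (∂ε^i_b(p,x)/∂x^j) · ε^b_k(x,p)`. -/
noncomputable def GammaBar {n : ℕ}
    (ε : (Fin n → ℝ) → (Fin n → ℝ) → Matrix (Fin n) (Fin n) ℝ)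
    (p x : Fin n → ℝ) (i j k : Fin n) : ℝ :=
  ∑ b, fderiv ℝ (fun y => ε p y i b) x (Pi.single j 1) * ε x p b k

/-- For a smooth splitting `ε` (`ε(x,x) = I`, `ε(y,z)·ε(x,y) = ε(x,z)`) on an open set `U`,
the quantity `Γ̄^i_{jk}(p,x)` is independent of the base point `p` and equals the
Christoffel symbol `Γ^i_{jk}(x)`. -/
theorem stmt_12 {n : ℕ} (U : Set (Fin n → ℝ)) (hU : IsOpen U)
    (ε : (Fin n → ℝ) → (Fin n → ℝ) → Matrix (Fin n) (Fin n) ℝ)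
    (hsmooth : ∀ i k, ContDiffOn ℝ (⊤ : ℕ∞)
      (fun q : (Fin n → ℝ) × (Fin n → ℝ) => ε q.1 q.2 i k) (U ×ˢ U))
    (hunit : ∀ x ∈ U, ∀ y ∈ U, IsUnit (ε x y))
    (hId : ∀ x ∈ U, ε x x = 1)
    (hCoc : ∀ x ∈ U, ∀ y ∈ U, ∀ z ∈ U, ε y z * ε x y = ε x z) :
    (∀ p ∈ U, ∀ q ∈ U, ∀ x ∈ U, ∀ i j k : Fin n,
      GammaBar ε p x i j k = GammaBar ε q x i j k) ∧
    (∀ p ∈ U, ∀ x ∈ U, ∀ i j k : Fin n,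
      GammaBar ε p x i j k = Gamma ε x i j k) := by
  have key : ∀ p ∈ U, ∀ x ∈ U, ∀ i j k : Fin n,
      GammaBar ε p x i j k = Gamma ε x i j k := by
    intro p hp x hx i j k
    have hdiff : ∀ a b : Fin n, DifferentiableAt ℝ (fun y => ε x y a b) x := by
      intro a b
      have h1 : ContDiffOn ℝ (⊤ : ℕ∞) (fun y => ε x y a b) U := by
        have hc : ContDiffOn ℝ (⊤ : ℕ∞) (fun y : Fin n → ℝ => ((x, y) : (Fin n → ℝ) × (Fin n → ℝ))) U :=
          contDiffOn_const.prodMk contDiffOn_id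
        exact (hsmooth a b).comp hc (fun y hy => ⟨hx, hy⟩)
      exact ((h1.differentiableOn (by simp)).differentiableAt (hU.mem_nhds hx))
    have hfd : ∀ b : Fin n, fderiv ℝ (fun y => ε p y i b) x (Pi.single j 1)
        = ∑ a, fderiv ℝ (fun y => ε x y i a) x (Pi.single j 1) * ε p x a b := by
      intro b
      have heq : (fun y => ε p y i b) =ᶠ[nhds x] (fun y => ∑ a, ε x y i a * ε p x a b) := by
        filter_upwards [hU.mem_nhds hx] with y hy
        have h := hCoc p hp x hx y hy
        calc ε p y i b = (ε x y * ε p x) i b := by rw [h]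
          _ = ∑ a, ε x y i a * ε p x a b := Matrix.mul_apply
      rw [heq.fderiv_eq]
      have hdsum : fderiv ℝ (fun y => ∑ a, ε x y i a * ε p x a b) x
          = ∑ a, fderiv ℝ (fun y => ε x y i a * ε p x a b) x := by
        apply fderiv_fun_sum
        intro a _
        exact (hdiff i a).mul_const _
      rw [hdsum]
      rw [ContinuousLinearMap.sum_apply]
      refine Finset.sum_congr rfl (fun a _ => ?_)
      rw [fderiv_mul_const (hdiff i a)]
      simp [mul_comm]
    unfold GammaBar Gamma
    calc ∑ b, fderiv ℝ (fun y => ε p y i b) x (Pi.single j 1) * ε x p b k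
        = ∑ b, (∑ a, fderiv ℝ (fun y => ε x y i a) x (Pi.single j 1) * ε p x a b) * ε x p b k := by
          exact Finset.sum_congr rfl (fun b _ => by rw [hfd b])
      _ = ∑ a, fderiv ℝ (fun y => ε x y i a) x (Pi.single j 1) * ∑ b, ε p x a b * ε x p b k := by
          simp_rw [Finset.sum_mul, Finset.mul_sum, mul_assoc]
          rw [Finset.sum_comm]
      _ = ∑ a, fderiv ℝ (fun y => ε x y i a) x (Pi.single j 1) * (1 : Matrix (Fin n) (Fin n) ℝ) a k := by
          refine Finset.sum_congr rfl (fun a _ => ?_)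
          congr 1
          have h := hCoc x hx p hp x hx
          rw [hId x hx] at h
          calc ∑ b, ε p x a b * ε x p b k = (ε p x * ε x p) a k := (Matrix.mul_apply).symm
            _ = (1 : Matrix (Fin n) (Fin n) ℝ) a k := by rw [h]
      _ = fderiv ℝ (fun y => ε x y i k) x (Pi.single j 1) := by
          rw [Finset.sum_eq_single k]
          · simp [Matrix.one_apply]
          · intro a _ ha; simp [Matrix.one_apply, ha]
          · simp
  refine ⟨fun p hp q hq x hx i j k => ?_, key⟩
  rw [key p hp x hx i j k, key q hq x hx i j k]
end

section
/- Let U ⊆ ℝⁿ be open and let ε : U × U → GL(n,ℝ) be a smooth map satisfying ε(x,x) = I and ε(y,z) · ε(x,y) = ε(x,z) for all x, y, z ∈ U. Define Γ^i_{jk}(x) := [∂ε^i_k(x,y)/∂y^j]_{y=x}. Then the curvature R₁ of Γ vanishes identically: for all x ∈ U and all indices i, j, k, r, ∂Γ^i_{jk}/∂x^r (x) + ∑_a Γ^a_{rk}(x) Γ^i_{ja}(x) − ∂Γ^i_{rk}/∂x^j (x) − ∑_a Γ^a_{jk}(x) Γ^i_{ra}(x) = 0. -/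
open Filter Matrix

/-- Differentiability of the determinant of a matrix-valued map, entrywise hypotheses. -/
lemma diffAt_det {E : Type*} [NormedAddCommGroup E] [NormedSpace ℝ E]
    {m : ℕ} {M : E → Matrix (Fin m) (Fin m) ℝ} {x : E}
    (h : ∀ p q, DifferentiableAt ℝ (fun z => M z p q) x) :
    DifferentiableAt ℝ (fun z => (M z).det) x := by
  have hrw : (fun z => (M z).det) =
      fun z => ∑ σ : Equiv.Perm (Fin m), ((Equiv.Perm.sign σ : ℤ) : ℝ) * ∏ i, M z (σ i) i := by
    funext z
    rw [Matrix.det_apply]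
    exact Finset.sum_congr rfl fun σ _ => by rw [Units.smul_def, zsmul_eq_mul]
  rw [hrw]
  classical
  refine DifferentiableAt.fun_sum fun σ _ => DifferentiableAt.const_mul ?_ _
  exact (HasFDerivAt.finset_prod (u := Finset.univ) (g := fun i z => M z (σ i) i)
    (fun i _ => (h (σ i) i).hasFDerivAt)).differentiableAt

/-- Differentiability of entries of the matrix inverse. -/
lemma diffAt_inv_entry {E : Type*} [NormedAddCommGroup E] [NormedSpace ℝ E]
    {m : ℕ} {M : E → Matrix (Fin m) (Fin m) ℝ} {x : E}
    (h : ∀ p q, DifferentiableAt ℝ (fun z => M z p q) x)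
    (hdet : (M x).det ≠ 0) (a k : Fin m) :
    DifferentiableAt ℝ (fun z => (M z)⁻¹ a k) x := by
  have hadj : DifferentiableAt ℝ (fun z => (M z).adjugate a k) x := by
    have hrw : (fun z => (M z).adjugate a k)
        = fun z => ((M z).updateRow k (Pi.single a 1)).det := by
      funext z; rw [Matrix.adjugate_apply]
    rw [hrw]
    apply diffAt_det
    intro p q
    rcases eq_or_ne p k with rfl | hp
    · simp only [Matrix.updateRow_self]
      exact differentiableAt_const _
    · simp only [Matrix.updateRow_ne hp]
      exact h p q
  have hrw : (fun z => (M z)⁻¹ a k) = fun z => ((M z).det)⁻¹ * (M z).adjugate a k := by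
    funext z
    rw [Matrix.inv_def, Matrix.smul_apply, Ring.inverse_eq_inv, smul_eq_mul]
  rw [hrw]
  exact ((diffAt_det h).inv hdet).mul hadj


/-- For a smooth splitting `ε` (`ε(x,x) = I`, `ε(y,z)·ε(x,y) = ε(x,z)`) on an open set `U`,
the curvature `R₁(ε)^i_{rj,k} = [∂Γ^i_{jk}/∂x^r + Γ^a_{rk} Γ^i_{ja}]_{[r,j]}` vanishes
identically on `U`. -/
theorem stmt_13 {n : ℕ} (U : Set (Fin n → ℝ)) (hU : IsOpen U)
    (ε : (Fin n → ℝ) → (Fin n → ℝ) → Matrix (Fin n) (Fin n) ℝ)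
    (hsmooth : ∀ i k, ContDiffOn ℝ (⊤ : ℕ∞)
      (fun q : (Fin n → ℝ) × (Fin n → ℝ) => ε q.1 q.2 i k) (U ×ˢ U))
    (hunit : ∀ x ∈ U, ∀ y ∈ U, IsUnit (ε x y))
    (hId : ∀ x ∈ U, ε x x = 1)
    (hCoc : ∀ x ∈ U, ∀ y ∈ U, ∀ z ∈ U, ε y z * ε x y = ε x z) :
    ∀ x ∈ U, ∀ i j k r : Fin n,
      fderiv ℝ (fun z => Gamma ε z i j k) x (Pi.single r 1) +
          (∑ a, Gamma ε x a r k * Gamma ε x i j a) -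
        fderiv ℝ (fun z => Gamma ε z i r k) x (Pi.single j 1) -
          (∑ a, Gamma ε x a j k * Gamma ε x i r a) = 0 := by
  intro x hx i j k r
  have hUx : U ∈ nhds x := hU.mem_nhds hx
  -- smoothness of entries of y ↦ ε x y at points of U
  have hfC : ∀ z ∈ U, ∀ p q : Fin n, ContDiffAt ℝ (⊤ : ℕ∞) (fun y => ε x y p q) z := by
    intro z hz p q
    have h1 : ContDiffAt ℝ (⊤ : ℕ∞) (fun w : (Fin n → ℝ) × (Fin n → ℝ) => ε w.1 w.2 p q) (x, z) :=
      (hsmooth p q).contDiffAt ((hU.prod hU).mem_nhds ⟨hx, hz⟩)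
    have h2 : ContDiffAt ℝ (⊤ : ℕ∞) (fun y : Fin n → ℝ => ((x, y) : (Fin n → ℝ) × (Fin n → ℝ))) z :=
      ContDiffAt.prodMk (contDiffAt_const (c := x)) contDiffAt_id
    exact h1.comp z h2
  have hfdiff : ∀ z ∈ U, ∀ p q : Fin n, DifferentiableAt ℝ (fun y => ε x y p q) z :=
    fun z hz p q => (hfC z hz p q).differentiableAt (by simp)
  have hone : ε x x = 1 := hId x hx
  have hinvx : (ε x x)⁻¹ = 1 := by rw [hone, inv_one]
  have hdetx : (ε x x).det ≠ 0 := by rw [hone, Matrix.det_one]; norm_num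
  have hgdiff : ∀ a b : Fin n, DifferentiableAt ℝ (fun z => (ε x z)⁻¹ a b) x :=
    fun a b => diffAt_inv_entry (fun p q => hfdiff x hx p q) hdetx a b
  have hinv : ∀ z ∈ U, ε z x = (ε x z)⁻¹ := by
    intro z hz
    have h1 : ε x z * ε z x = 1 := by rw [hCoc z hz x hx z hz, hId z hz]
    exact (Matrix.inv_eq_right_inv h1).symm
  -- Claim A: local formula for Gamma
  have hGamma : ∀ z ∈ U, ∀ p q s : Fin n, Gamma ε z p s q =
      ∑ a, fderiv ℝ (fun y => ε x y p a) z (Pi.single s 1) * (ε x z)⁻¹ a q := by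
    intro z hz p q s
    have hev : (fun y => ε z y p q) =ᶠ[nhds z] fun y => ∑ a, ε x y p a * (ε x z)⁻¹ a q := by
      filter_upwards [hU.mem_nhds hz] with y hy
      rw [← hCoc z hz x hx y hy, hinv z hz, Matrix.mul_apply]
    have hd : ∀ a : Fin n, a ∈ Finset.univ →
        DifferentiableAt ℝ (fun y => ε x y p a * (ε x z)⁻¹ a q) z :=
      fun a _ => (hfdiff z hz p a).mul_const _
    simp only [Gamma]
    rw [hev.fderiv_eq, fderiv_fun_sum hd, ContinuousLinearMap.sum_apply]
    refine Finset.sum_congr rfl fun a _ => ?_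
    rw [fderiv_mul_const (hfdiff z hz p a), ContinuousLinearMap.smul_apply, smul_eq_mul, mul_comm]
  -- smoothness/differentiability of the directional derivative maps
  have hDfC : ∀ p q s : Fin n,
      ContDiffAt ℝ (⊤ : ℕ∞) (fun z => fderiv ℝ (fun y => ε x y p q) z (Pi.single s 1)) x := by
    intro p q s
    have h1 : ContDiffAt ℝ (⊤ : ℕ∞) (fderiv ℝ (fun y => ε x y p q)) x :=
      (hfC x hx p q).fderiv_right (m := (⊤ : ℕ∞)) (by simp)
    exact (ContinuousLinearMap.apply ℝ ℝ
      ((Pi.single s 1 : Fin n → ℝ))).contDiff.comp_contDiffAt x h1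
  have hDfdiff : ∀ p q s : Fin n,
      DifferentiableAt ℝ (fun z => fderiv ℝ (fun y => ε x y p q) z (Pi.single s 1)) x :=
    fun p q s => (hDfC p q s).differentiableAt (by simp)
  -- derivative of the inverse at x
  have hDg : ∀ a b s : Fin n, fderiv ℝ (fun z => (ε x z)⁻¹ a b) x (Pi.single s 1)
      = - fderiv ℝ (fun y => ε x y a b) x (Pi.single s 1) := by
    intro a b s
    have hev : (fun z => ∑ c, ε x z a c * (ε x z)⁻¹ c b)
        =ᶠ[nhds x] fun _ => (1 : Matrix (Fin n) (Fin n) ℝ) a b := by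
      filter_upwards [hUx] with z hz
      rw [← Matrix.mul_apply,
        Matrix.mul_nonsing_inv _ ((Matrix.isUnit_iff_isUnit_det _).mp (hunit x hx z hz))]
    have hdterm : ∀ c : Fin n, c ∈ Finset.univ →
        DifferentiableAt ℝ (fun z => ε x z a c * (ε x z)⁻¹ c b) x :=
      fun c _ => (hfdiff x hx a c).mul (hgdiff c b)
    have h0 : fderiv ℝ (fun z => ∑ c, ε x z a c * (ε x z)⁻¹ c b) x (Pi.single s 1) = (0 : ℝ) := by
      rw [hev.fderiv_eq, fderiv_const_apply, ContinuousLinearMap.zero_apply]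
    have h1 : fderiv ℝ (fun z => ∑ c, ε x z a c * (ε x z)⁻¹ c b) x (Pi.single s 1)
        = ∑ c, (ε x x a c * fderiv ℝ (fun z => (ε x z)⁻¹ c b) x (Pi.single s 1)
            + (ε x x)⁻¹ c b * fderiv ℝ (fun z => ε x z a c) x (Pi.single s 1)) := by
      rw [fderiv_fun_sum hdterm, ContinuousLinearMap.sum_apply]
      refine Finset.sum_congr rfl fun c _ => ?_
      rw [fderiv_fun_mul (hfdiff x hx a c) (hgdiff c b), ContinuousLinearMap.add_apply,
        ContinuousLinearMap.smul_apply, ContinuousLinearMap.smul_apply, smul_eq_mul, smul_eq_mul]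
    rw [h1] at h0
    simp only [hone, inv_one, Matrix.one_apply, ite_mul, one_mul, zero_mul,
      Finset.sum_add_distrib, Finset.sum_ite_eq, Finset.sum_ite_eq', Finset.mem_univ,
      if_true] at h0
    linarith [h0]
  -- key computation of the derivative of Gamma at x
  have key : ∀ s t : Fin n, fderiv ℝ (fun z => Gamma ε z i s k) x (Pi.single t 1)
      = fderiv ℝ (fun z => fderiv ℝ (fun y => ε x y i k) z (Pi.single s 1)) x (Pi.single t 1)
        - ∑ a, Gamma ε x i s a * Gamma ε x a t k := by
    intro s t
    have hev : (fun z => Gamma ε z i s k) =ᶠ[nhds x]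
        fun z => ∑ a, fderiv ℝ (fun y => ε x y i a) z (Pi.single s 1) * (ε x z)⁻¹ a k := by
      filter_upwards [hUx] with z hz
      exact hGamma z hz i k s
    have hdterm : ∀ a : Fin n, a ∈ Finset.univ → DifferentiableAt ℝ
        (fun z => fderiv ℝ (fun y => ε x y i a) z (Pi.single s 1) * (ε x z)⁻¹ a k) x :=
      fun a _ => (hDfdiff i a s).mul (hgdiff a k)
    rw [hev.fderiv_eq, fderiv_fun_sum hdterm, ContinuousLinearMap.sum_apply]
    have hterm : ∀ a : Fin n, a ∈ Finset.univ →
        (fderiv ℝ (fun z => fderiv ℝ (fun y => ε x y i a) z (Pi.single s 1) * (ε x z)⁻¹ a k) x)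
          (Pi.single t 1)
        = (1 : Matrix (Fin n) (Fin n) ℝ) a k *
            fderiv ℝ (fun z => fderiv ℝ (fun y => ε x y i a) z (Pi.single s 1)) x (Pi.single t 1)
          + Gamma ε x i s a * (- Gamma ε x a t k) := by
      intro a _
      rw [fderiv_fun_mul (hDfdiff i a s) (hgdiff a k), ContinuousLinearMap.add_apply,
        ContinuousLinearMap.smul_apply, ContinuousLinearMap.smul_apply, smul_eq_mul, smul_eq_mul,
        hDg a k t, hinvx]
      simp only [Gamma]
      ring
    rw [Finset.sum_congr rfl hterm, Finset.sum_add_distrib]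
    simp only [Matrix.one_apply, ite_mul, one_mul, zero_mul, Finset.sum_ite_eq',
      Finset.mem_univ, if_true, mul_neg, Finset.sum_neg_distrib]
    ring
  -- Schwarz symmetry
  have hsymm : fderiv ℝ (fun z => fderiv ℝ (fun y => ε x y i k) z (Pi.single j 1)) x (Pi.single r 1)
      = fderiv ℝ (fun z => fderiv ℝ (fun y => ε x y i k) z (Pi.single r 1)) x (Pi.single j 1) := by
    have hsym := (hfC x hx i k).isSymmSndFDerivAt (by rw [minSmoothness_of_isRCLikeNormedField]; exact WithTop.coe_le_coe.mpr (le_top : (2 : ℕ∞) ≤ ⊤))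
    have hD : DifferentiableAt ℝ (fderiv ℝ (fun y => ε x y i k)) x :=
      ((hfC x hx i k).fderiv_right (m := (⊤ : ℕ∞)) (by simp)).differentiableAt (by simp)
    have h1 : ∀ v w : Fin n → ℝ, fderiv ℝ (fun z => fderiv ℝ (fun y => ε x y i k) z v) x w
        = fderiv ℝ (fderiv ℝ (fun y => ε x y i k)) x w v := by
      intro v w
      rw [fderiv_clm_apply hD (differentiableAt_const v)]
      simp
    rw [h1, h1, hsym.eq]
  rw [key j r, key r j, hsymm]
  have hc1 : ∑ a, Gamma ε x a r k * Gamma ε x i j a = ∑ a, Gamma ε x i j a * Gamma ε x a r k :=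
    Finset.sum_congr rfl fun a _ => mul_comm _ _
  have hc2 : ∑ a, Gamma ε x a j k * Gamma ε x i r a = ∑ a, Gamma ε x i r a * Gamma ε x a j k :=
    Finset.sum_congr rfl fun a _ => mul_comm _ _
  rw [hc1, hc2]
  ring
end

section
/- Let U ⊆ ℝⁿ be open and connected, and let ε : U × U → GL(n,ℝ) be a smooth map satisfying ε(x,x) = I and ε(y,z) · ε(x,y) = ε(x,z) for all x, y, z ∈ U. Define Γ^i_{jk}(x) := [∂ε^i_k(x,y)/∂y^j]_{y=x}. Then for a continuously differentiable vector field V : U → ℝⁿ the following are equivalent: (i) V is ε-invariant, i.e. V(x) = ε(p,x) · V(p) for all p, x ∈ U; (ii) V solves the linear PDE ∂V^i/∂x^j (x) = ∑_a Γ^i_{ja}(x) V^a(x) for all x ∈ U and all indices i, j. -/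
set_option linter.unusedVariables false

variable {n : ℕ} {U : Set (Fin n → ℝ)}
  {ε : (Fin n → ℝ) → (Fin n → ℝ) → Matrix (Fin n) (Fin n) ℝ}

lemma aux_diff2 (hU : IsOpen U)
    (hsmooth : ∀ i k, ContDiffOn ℝ (⊤ : ℕ∞)
      (fun q : (Fin n → ℝ) × (Fin n → ℝ) => ε q.1 q.2 i k) (U ×ˢ U))
    {x y : Fin n → ℝ} (hx : x ∈ U) (hy : y ∈ U) (i k : Fin n) :
    DifferentiableAt ℝ (fun z => ε x z i k) y := by
  have h := ((hsmooth i k).contDiffAt ((hU.prod hU).mem_nhds (Set.mk_mem_prod hx hy))).differentiableAt (by simp)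
  exact h.comp y ((differentiableAt_const x).prodMk differentiableAt_id)

lemma aux_diff1 (hU : IsOpen U)
    (hsmooth : ∀ i k, ContDiffOn ℝ (⊤ : ℕ∞)
      (fun q : (Fin n → ℝ) × (Fin n → ℝ) => ε q.1 q.2 i k) (U ×ˢ U))
    {x p : Fin n → ℝ} (hx : x ∈ U) (hp : p ∈ U) (i k : Fin n) :
    DifferentiableAt ℝ (fun z => ε z p i k) x := by
  have h := ((hsmooth i k).contDiffAt ((hU.prod hU).mem_nhds (Set.mk_mem_prod hx hp))).differentiableAt (by simp)
  exact h.comp x (differentiableAt_id.prodMk (differentiableAt_const p) :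
    DifferentiableAt ℝ (fun z : Fin n → ℝ => (z, p)) x)

lemma aux_key (hU : IsOpen U)
    (hsmooth : ∀ i k, ContDiffOn ℝ (⊤ : ℕ∞)
      (fun q : (Fin n → ℝ) × (Fin n → ℝ) => ε q.1 q.2 i k) (U ×ˢ U))
    (hId : ∀ x ∈ U, ε x x = 1)
    (hCoc : ∀ x ∈ U, ∀ y ∈ U, ∀ z ∈ U, ε y z * ε x y = ε x z)
    {p x₀ : Fin n → ℝ} (hp : p ∈ U) (hx₀ : x₀ ∈ U) (i a j : Fin n) :
    fderiv ℝ (fun x => ε x p i a) x₀ (Pi.single j 1) =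
      -∑ k, ε x₀ p i k * Gamma ε x₀ k j a := by
  set F : (Fin n → ℝ) → ℝ := fun y => ∑ k, ε y p i k * ε x₀ y k a with hF
  have hFconst : F =ᶠ[nhds x₀] fun _ => ε x₀ p i a := by
    filter_upwards [hU.mem_nhds hx₀] with y hy
    have h := hCoc x₀ hx₀ y hy p hp
    calc F y = (ε y p * ε x₀ y) i a := (Matrix.mul_apply).symm
    _ = ε x₀ p i a := by rw [h]
  have hF0 : fderiv ℝ F x₀ = 0 := by
    rw [hFconst.fderiv_eq]; exact fderiv_const_apply _
  have hdiff : ∀ k : Fin n, DifferentiableAt ℝ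
      (fun y => ε y p i k * ε x₀ y k a) x₀ :=
    fun k => (aux_diff1 hU hsmooth hx₀ hp i k).mul (aux_diff2 hU hsmooth hx₀ hx₀ k a)
  have hsum : fderiv ℝ F x₀ (Pi.single j 1) =
      ∑ k, (ε x₀ p i k * Gamma ε x₀ k j a +
        ε x₀ x₀ k a * fderiv ℝ (fun y => ε y p i k) x₀ (Pi.single j 1)) := by
    rw [hF, fderiv_fun_sum (fun k _ => hdiff k)]
    rw [ContinuousLinearMap.sum_apply]
    refine Finset.sum_congr rfl fun k _ => ?_
    rw [fderiv_fun_mul (aux_diff1 hU hsmooth hx₀ hp i k) (aux_diff2 hU hsmooth hx₀ hx₀ k a)]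
    simp [Gamma]
  rw [hF0] at hsum
  simp only [hId x₀ hx₀, Matrix.one_apply] at hsum
  rw [Finset.sum_add_distrib] at hsum
  have hdelta : ∑ k, (if k = a then (1:ℝ) else 0) *
      fderiv ℝ (fun y => ε y p i k) x₀ (Pi.single j 1) =
      fderiv ℝ (fun y => ε y p i a) x₀ (Pi.single j 1) := by
    simp
  rw [hdelta] at hsum
  simp only [ContinuousLinearMap.zero_apply] at hsum
  linarith

lemma aux_const {f : (Fin n → ℝ) → ℝ} (hU : IsOpen U) (hconn : IsPreconnected U)
    (hdiff : ∀ x ∈ U, DifferentiableAt ℝ f x)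
    (hder : ∀ x ∈ U, fderiv ℝ f x = 0)
    {p q : Fin n → ℝ} (hp : p ∈ U) (hq : q ∈ U) : f q = f p := by
  -- local constancy
  have hloc : ∀ x ∈ U, ∃ r > 0, Metric.ball x r ⊆ U ∧
      ∀ y ∈ Metric.ball x r, f y = f x := by
    intro x hx
    obtain ⟨r, hr, hball⟩ := Metric.isOpen_iff.1 hU x hx
    refine ⟨r, hr, hball, fun y hy => ?_⟩
    refine (convex_ball x r).is_const_of_fderivWithin_eq_zero
      (fun z hz => (hdiff z (hball hz)).differentiableWithinAt)
      (fun z hz => ?_) hy (Metric.mem_ball_self hr)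
    rw [fderivWithin_of_isOpen Metric.isOpen_ball hz]
    exact hder z (hball hz)
  by_contra hne
  set S : Set (Fin n → ℝ) := {x | x ∈ U ∧ f x = f p} with hS
  set T : Set (Fin n → ℝ) := {x | x ∈ U ∧ f x ≠ f p} with hT
  have hSopen : IsOpen S := by
    rw [Metric.isOpen_iff]
    rintro x ⟨hxU, hxf⟩
    obtain ⟨r, hr, hbU, hconst⟩ := hloc x hxU
    exact ⟨r, hr, fun y hy => ⟨hbU hy, by rw [hconst y hy, hxf]⟩⟩
  have hTopen : IsOpen T := by
    rw [Metric.isOpen_iff]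
    rintro x ⟨hxU, hxf⟩
    obtain ⟨r, hr, hbU, hconst⟩ := hloc x hxU
    exact ⟨r, hr, fun y hy => ⟨hbU hy, by rw [hconst y hy]; exact hxf⟩⟩
  have hcover : U ⊆ S ∪ T := by
    intro x hx
    by_cases h : f x = f p
    · exact Or.inl ⟨hx, h⟩
    · exact Or.inr ⟨hx, h⟩
  have hSne : (U ∩ S).Nonempty := ⟨p, hp, hp, rfl⟩
  have hTne : (U ∩ T).Nonempty := ⟨q, hq, hq, hne⟩
  obtain ⟨z, _, ⟨_, hz1⟩, ⟨_, hz2⟩⟩ := hconn S T hSopen hTopen hcover hSne hTne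
  exact hz2 hz1

/-- For a smooth splitting `ε` on an open connected set `U` and a continuously
differentiable vector field `V` on `U`, the following are equivalent:
(i) `V` is `ε`-invariant, i.e. `V(x) = ε(p,x) · V(p)` for all `p, x ∈ U`;
(ii) `V` solves the linear PDE `∂V^i/∂x^j = ∑_a Γ^i_{ja} V^a` on `U`. -/
theorem stmt_14 {n : ℕ} (U : Set (Fin n → ℝ)) (hU : IsOpen U) (hconn : IsConnected U)
    (ε : (Fin n → ℝ) → (Fin n → ℝ) → Matrix (Fin n) (Fin n) ℝ)
    (hsmooth : ∀ i k, ContDiffOn ℝ (⊤ : ℕ∞)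
      (fun q : (Fin n → ℝ) × (Fin n → ℝ) => ε q.1 q.2 i k) (U ×ˢ U))
    (hunit : ∀ x ∈ U, ∀ y ∈ U, IsUnit (ε x y))
    (hId : ∀ x ∈ U, ε x x = 1)
    (hCoc : ∀ x ∈ U, ∀ y ∈ U, ∀ z ∈ U, ε y z * ε x y = ε x z)
    (V : (Fin n → ℝ) → (Fin n → ℝ)) (hV : ContDiffOn ℝ 1 V U) :
    (∀ p ∈ U, ∀ x ∈ U, V x = (ε p x).mulVec (V p)) ↔
      (∀ x ∈ U, ∀ i j : Fin n,
        fderiv ℝ (fun y => V y i) x (Pi.single j 1) =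
          ∑ a, Gamma ε x i j a * V x a) := by
  have hVdiff : ∀ x ∈ U, ∀ a : Fin n, DifferentiableAt ℝ (fun y => V y a) x := by
    intro x hx a
    have h1 : DifferentiableAt ℝ V x :=
      ((hV.differentiableOn one_ne_zero) x hx).differentiableAt (hU.mem_nhds hx)
    exact ((ContinuousLinearMap.proj a :
      (Fin n → ℝ) →L[ℝ] ℝ).differentiableAt).comp x h1
  constructor
  · -- invariance → PDE
    intro hinv x₀ hx₀ i j
    have hev : (fun y => V y i) =ᶠ[nhds x₀]
        fun y => ∑ a, ε x₀ y i a * V x₀ a := by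
      filter_upwards [hU.mem_nhds hx₀] with y hy
      rw [hinv x₀ hx₀ y hy]
      simp [Matrix.mulVec, dotProduct]
    rw [hev.fderiv_eq]
    rw [fderiv_fun_sum (fun a _ =>
      (aux_diff2 hU hsmooth hx₀ hx₀ i a).mul_const (V x₀ a))]
    rw [ContinuousLinearMap.sum_apply]
    refine Finset.sum_congr rfl fun a _ => ?_
    rw [fderiv_mul_const (aux_diff2 hU hsmooth hx₀ hx₀ i a)]
    simp [Gamma, mul_comm]
  · -- PDE → invariance
    intro hpde p hp x₀ hx₀
    -- claim: for each i, x ↦ ∑ a, ε x p i a * V x a is constant on U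
    have hclaim : ∀ i : Fin n, ∀ q ∈ U,
        (∑ a, ε q p i a * V q a) = ∑ a, ε p p i a * V p a := by
      intro i q hq
      set f : (Fin n → ℝ) → ℝ := fun x => ∑ a, ε x p i a * V x a with hf
      have hfdiff : ∀ x ∈ U, DifferentiableAt ℝ f x := by
        intro x hx
        exact DifferentiableAt.fun_sum fun a _ =>
          (aux_diff1 hU hsmooth hx hp i a).mul (hVdiff x hx a)
      have hfder : ∀ x ∈ U, fderiv ℝ f x = 0 := by
        intro x hx
        have hzero : ∀ j : Fin n, fderiv ℝ f x (Pi.single j 1) = 0 := by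
          intro j
          rw [hf, fderiv_fun_sum (fun a _ =>
            (aux_diff1 hU hsmooth hx hp i a).fun_mul (hVdiff x hx a))]
          rw [ContinuousLinearMap.sum_apply]
          have hterm : ∀ a : Fin n,
              fderiv ℝ (fun y => ε y p i a * V y a) x (Pi.single j 1) =
              (-∑ k, ε x p i k * Gamma ε x k j a) * V x a +
                ε x p i a * ∑ b, Gamma ε x a j b * V x b := by
            intro a
            rw [fderiv_fun_mul (aux_diff1 hU hsmooth hx hp i a) (hVdiff x hx a)]
            rw [ContinuousLinearMap.add_apply, ContinuousLinearMap.smul_apply,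
              ContinuousLinearMap.smul_apply]
            rw [aux_key hU hsmooth hId hCoc hp hx i a j, hpde x hx a j]
            simp only [smul_eq_mul]
            ring
          rw [Finset.sum_congr rfl fun a _ => hterm a]
          rw [Finset.sum_add_distrib]
          have h1 : ∑ a, (-∑ k, ε x p i k * Gamma ε x k j a) * V x a =
              -∑ a, ∑ k, ε x p i k * Gamma ε x k j a * V x a := by
            simp [Finset.sum_mul, Finset.mul_sum]
          have h2 : ∑ a, ε x p i a * ∑ b, Gamma ε x a j b * V x b =
              ∑ a, ∑ k, ε x p i k * Gamma ε x k j a * V x a := by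
            rw [Finset.sum_comm]
            refine Finset.sum_congr rfl fun a _ => ?_
            rw [Finset.mul_sum]
            refine Finset.sum_congr rfl fun k _ => ?_
            ring
          rw [h1, h2]
          ring
        -- a CLM vanishing on the basis is zero
        apply ContinuousLinearMap.ext
        intro v
        have hv : (∑ j, v j • (Pi.single j 1 : Fin n → ℝ)) = v := by
          ext k
          simp [Pi.single_apply]
        rw [← hv, map_sum]
        simp [hzero]
      exact aux_const hU hconn.isPreconnected hfdiff hfder hp hq
    have hVp : (ε x₀ p).mulVec (V x₀) = V p := by
      funext i
      have h := hclaim i x₀ hx₀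
      have h2 : ∑ a, ε p p i a * V p a = V p i := by
        simp [hId p hp, Matrix.one_apply]
      rw [h2] at h
      rw [← h]
      simp [Matrix.mulVec, dotProduct]
    have hone : ε p x₀ * ε x₀ p = 1 := by
      rw [hCoc x₀ hx₀ p hp x₀ hx₀, hId x₀ hx₀]
    calc V x₀ = (1 : Matrix (Fin n) (Fin n) ℝ).mulVec (V x₀) := by
          rw [Matrix.one_mulVec]
      _ = (ε p x₀ * ε x₀ p).mulVec (V x₀) := by rw [hone]
      _ = (ε p x₀).mulVec ((ε x₀ p).mulVec (V x₀)) := by rw [Matrix.mulVec_mulVec]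
      _ = (ε p x₀).mulVec (V p) := by rw [hVp]
end

section
/- Let U ⊆ ℝⁿ be open and let ε : U × U → GL(n,ℝ) be a smooth map satisfying ε(x,x) = I and ε(y,z) · ε(x,y) = ε(x,z) for all x, y, z ∈ U, with Christoffel symbols Γ^i_{jk}(x) := [∂ε^i_k(x,y)/∂y^j]_{y=x}. Define the 1-form w with components w_i(x) := ∑_a (Γ^a_{ia}(x) − Γ^a_{ai}(x)). Then the exterior derivative of w equals the trace of the curvature R₂: for all x ∈ U and all indices i, j, ∂w_i/∂x^j (x) − ∂w_j/∂x^i (x) = ∑_a (∂Γ^a_{aj}/∂x^i (x) − ∂Γ^a_{ai}/∂x^j (x)). -/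
/-- Directional derivative in the second slot of `ε` with fixed first slot `x`. -/
noncomputable def DS {n : ℕ} (ε : (Fin n → ℝ) → (Fin n → ℝ) → Matrix (Fin n) (Fin n) ℝ)
    (x : Fin n → ℝ) (p a b : Fin n) (z : Fin n → ℝ) : ℝ :=
  fderiv ℝ (fun y => ε x y a b) z (Pi.single p 1)

/-- Local (base-point `x`) expression for the Christoffel symbols. -/
noncomputable def GG {n : ℕ} (ε : (Fin n → ℝ) → (Fin n → ℝ) → Matrix (Fin n) (Fin n) ℝ)
    (x : Fin n → ℝ) (a p q : Fin n) (z : Fin n → ℝ) : ℝ :=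
  ∑ b, DS ε x p a b z * ε z x b q

/-- For a smooth splitting `ε` on an open set `U`, with `w_i = ∑_a (Γ^a_{ia} − Γ^a_{ai})`,
the exterior derivative of the 1-form `w` is the trace of the curvature `R₂(ε)`:
`∂w_i/∂x^j − ∂w_j/∂x^i = ∑_a (∂Γ^a_{aj}/∂x^i − ∂Γ^a_{ai}/∂x^j)`. -/
theorem stmt_15 {n : ℕ} (U : Set (Fin n → ℝ)) (hU : IsOpen U)
    (ε : (Fin n → ℝ) → (Fin n → ℝ) → Matrix (Fin n) (Fin n) ℝ)
    (hsmooth : ∀ i k, ContDiffOn ℝ (⊤ : ℕ∞)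
      (fun q : (Fin n → ℝ) × (Fin n → ℝ) => ε q.1 q.2 i k) (U ×ˢ U))
    (hunit : ∀ x ∈ U, ∀ y ∈ U, IsUnit (ε x y))
    (hId : ∀ x ∈ U, ε x x = 1)
    (hCoc : ∀ x ∈ U, ∀ y ∈ U, ∀ z ∈ U, ε y z * ε x y = ε x z) :
    ∀ x ∈ U, ∀ i j : Fin n,
      fderiv ℝ (fun z => ∑ a, (Gamma ε z a i a - Gamma ε z a a i)) x (Pi.single j 1) -
          fderiv ℝ (fun z => ∑ a, (Gamma ε z a j a - Gamma ε z a a j)) x (Pi.single i 1) =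
        ∑ a, (fderiv ℝ (fun z => Gamma ε z a a j) x (Pi.single i 1) -
          fderiv ℝ (fun z => Gamma ε z a a i) x (Pi.single j 1)) := by
  classical
  intro x hx i j
  have hxU : U ∈ nhds x := hU.mem_nhds hx
  -- smoothness of the slices
  have hAsm : ∀ a b : Fin n, ∀ z ∈ U, ContDiffAt ℝ (⊤ : ℕ∞) (fun y => ε x y a b) z := by
    intro a b z hz
    have h1 : ContDiffAt ℝ (⊤ : ℕ∞) (fun q : (Fin n → ℝ) × (Fin n → ℝ) => ε q.1 q.2 a b) (x, z) :=
      (hsmooth a b).contDiffAt ((hU.prod hU).mem_nhds ⟨hx, hz⟩)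
    exact h1.comp z (ContDiffAt.prodMk contDiffAt_const contDiffAt_id)
  have hCsm : ∀ b k : Fin n, ∀ z ∈ U, ContDiffAt ℝ (⊤ : ℕ∞) (fun w => ε w x b k) z := by
    intro b k z hz
    have h1 : ContDiffAt ℝ (⊤ : ℕ∞) (fun q : (Fin n → ℝ) × (Fin n → ℝ) => ε q.1 q.2 b k) (z, x) :=
      (hsmooth b k).contDiffAt ((hU.prod hU).mem_nhds ⟨hz, hx⟩)
    exact h1.comp z (ContDiffAt.prodMk contDiffAt_id contDiffAt_const)
  have hAdiff : ∀ a b : Fin n, ∀ z ∈ U, DifferentiableAt ℝ (fun y => ε x y a b) z :=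
    fun a b z hz => (hAsm a b z hz).differentiableAt (by simp)
  have hCdiff : ∀ b k : Fin n, ∀ z ∈ U, DifferentiableAt ℝ (fun w => ε w x b k) z :=
    fun b k z hz => (hCsm b k z hz).differentiableAt (by simp)
  have hDAdiff : ∀ p a b : Fin n, ∀ z ∈ U, DifferentiableAt ℝ (DS ε x p a b) z := by
    intro p a b z hz
    have h1 : ContDiffAt ℝ 1 (fderiv ℝ (fun y => ε x y a b)) z :=
      ContDiffAt.fderiv_right ((hAsm a b z hz).of_le (WithTop.coe_le_coe.mpr le_top) : ContDiffAt ℝ 2 _ z) (by norm_num)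
    exact ((h1.clm_apply contDiffAt_const).differentiableAt one_ne_zero : DifferentiableAt ℝ
      (fun z => fderiv ℝ (fun y => ε x y a b) z (Pi.single p 1)) z)
  -- Gamma agrees with GG on U
  have hGamma_eq : ∀ z ∈ U, ∀ a p q : Fin n, Gamma ε z a p q = GG ε x a p q z := by
    intro z hz a p q
    have hev : (fun w => ε z w a q) =ᶠ[nhds z] (fun w => ∑ b, ε x w a b * ε z x b q) := by
      filter_upwards [hU.mem_nhds hz] with w hw
      rw [← hCoc z hz x hx w hw, Matrix.mul_apply]
    have h2 : fderiv ℝ (fun w => ε z w a q) z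
        = fderiv ℝ (fun w => ∑ b, ε x w a b * ε z x b q) z := hev.fderiv_eq
    rw [Gamma, h2, fderiv_fun_sum (fun b _ => (hAdiff a b z hz).mul_const _)]
    simp only [ContinuousLinearMap.coe_sum', Finset.sum_apply, GG]
    refine Finset.sum_congr rfl fun b _ => ?_
    rw [fderiv_mul_const (hAdiff a b z hz)]
    simp [DS, mul_comm]
  -- values at x
  have hA1 : ∀ a b : Fin n, ε x x a b = if a = b then 1 else 0 := by
    intro a b; rw [hId x hx]; exact Matrix.one_apply
  -- derivative of the inverse slice at x
  have hCderiv : ∀ b q r : Fin n,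
      fderiv ℝ (fun w => ε w x b q) x (Pi.single r 1) = - DS ε x r b q x := by
    intro b q r
    have hev : (fun y => ∑ c, ε x y b c * ε y x c q)
        =ᶠ[nhds x] (fun _ => (1 : Matrix (Fin n) (Fin n) ℝ) b q) := by
      filter_upwards [hxU] with y hy
      rw [← Matrix.mul_apply, hCoc y hy x hx y hy, hId y hy]
    have h0 : fderiv ℝ (fun y => ∑ c, ε x y b c * ε y x c q) x = 0 := by
      rw [hev.fderiv_eq]; exact fderiv_const_apply _
    have h1 : fderiv ℝ (fun y => ∑ c, ε x y b c * ε y x c q) x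
        = ∑ c, (ε x x b c • fderiv ℝ (fun w => ε w x c q) x
            + ε x x c q • fderiv ℝ (fun y => ε x y b c) x) := by
      rw [fderiv_fun_sum (fun c _ => (hAdiff b c x hx).fun_mul (hCdiff c q x hx))]
      exact Finset.sum_congr rfl fun c _ => fderiv_fun_mul (hAdiff b c x hx) (hCdiff c q x hx)
    have h2 := congrArg (fun L : (Fin n → ℝ) →L[ℝ] ℝ => L (Pi.single r 1)) (h0.symm.trans h1)
    simp only [ContinuousLinearMap.zero_apply, ContinuousLinearMap.coe_sum', Finset.sum_apply,
      ContinuousLinearMap.add_apply, ContinuousLinearMap.smul_apply, smul_eq_mul, hA1,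
      ite_mul, one_mul, zero_mul, Finset.sum_add_distrib, Finset.sum_ite_eq, Finset.sum_ite_eq',
      Finset.mem_univ, if_true] at h2
    have : DS ε x r b q x = fderiv ℝ (fun y => ε x y b q) x (Pi.single r 1) := rfl
    linarith [h2]
  -- derivative of GG a p a at x
  have hGderiv : ∀ a p r : Fin n, fderiv ℝ (GG ε x a p a) x (Pi.single r 1)
      = fderiv ℝ (DS ε x p a a) x (Pi.single r 1)
        - ∑ b, DS ε x p a b x * DS ε x r b a x := by
    intro a p r
    have h1 : fderiv ℝ (GG ε x a p a) x
        = ∑ b, (DS ε x p a b x • fderiv ℝ (fun w => ε w x b a) x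
            + ε x x b a • fderiv ℝ (DS ε x p a b) x) := by
      rw [show GG ε x a p a = fun z => ∑ b, DS ε x p a b z * ε z x b a from rfl,
        fderiv_fun_sum (fun b _ => (hDAdiff p a b x hx).fun_mul (hCdiff b a x hx))]
      exact Finset.sum_congr rfl fun b _ => fderiv_fun_mul (hDAdiff p a b x hx) (hCdiff b a x hx)
    have h2 := congrArg (fun L : (Fin n → ℝ) →L[ℝ] ℝ => L (Pi.single r 1)) h1
    simp only [ContinuousLinearMap.coe_sum', Finset.sum_apply, ContinuousLinearMap.add_apply,
      ContinuousLinearMap.smul_apply, smul_eq_mul, hA1, hCderiv, ite_mul, one_mul, zero_mul,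
      Finset.sum_add_distrib, Finset.sum_ite_eq, Finset.sum_ite_eq', Finset.mem_univ, if_true,
      mul_neg] at h2
    rw [h2, Finset.sum_neg_distrib]; ring
  -- symmetry of second derivatives
  have hsym1 : ∀ a : Fin n, fderiv ℝ (DS ε x i a a) x (Pi.single j 1)
      = fderiv ℝ (DS ε x j a a) x (Pi.single i 1) := by
    intro a
    have hdd : DifferentiableAt ℝ (fderiv ℝ (fun y => ε x y a a)) x :=
      (ContDiffAt.fderiv_right ((hAsm a a x hx).of_le (WithTop.coe_le_coe.mpr le_top) : ContDiffAt ℝ 2 _ x)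
        (by norm_num) : ContDiffAt ℝ 1 _ x).differentiableAt one_ne_zero
    have hds : ∀ p r : Fin n, fderiv ℝ (DS ε x p a a) x (Pi.single r 1)
        = fderiv ℝ (fderiv ℝ (fun y => ε x y a a)) x (Pi.single r 1) (Pi.single p 1) := by
      intro p r
      have := fderiv_clm_apply (x := x) hdd
        (differentiableAt_const (Pi.single p 1 : Fin n → ℝ))
      rw [show DS ε x p a a = fun z => fderiv ℝ (fun y => ε x y a a) z (Pi.single p 1) from rfl,
        this]
      simp
    rw [hds i j, hds j i]
    exact ((hAsm a a x hx).isSymmSndFDerivAt (by simp; exact WithTop.coe_le_coe.mpr le_top)) _ _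
  -- differentiability of GG at x
  have hGdiff : ∀ a p q : Fin n, DifferentiableAt ℝ (GG ε x a p q) x := by
    intro a p q
    exact DifferentiableAt.fun_sum fun b _ => (hDAdiff p a b x hx).mul (hCdiff b q x hx)
  -- rewrite Gamma into GG in the goal
  have hfe : ∀ p : Fin n, fderiv ℝ (fun z => ∑ a, (Gamma ε z a p a - Gamma ε z a a p)) x
      = fderiv ℝ (fun z => ∑ a, (GG ε x a p a z - GG ε x a a p z)) x := by
    intro p
    apply Filter.EventuallyEq.fderiv_eq
    filter_upwards [hxU] with z hz
    exact Finset.sum_congr rfl fun a _ => by rw [hGamma_eq z hz, hGamma_eq z hz]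
  have hfe2 : ∀ a p : Fin n, fderiv ℝ (fun z => Gamma ε z a a p) x
      = fderiv ℝ (GG ε x a a p) x := by
    intro a p
    apply Filter.EventuallyEq.fderiv_eq
    filter_upwards [hxU] with z hz
    exact hGamma_eq z hz a a p
  have hsplit : ∀ p r : Fin n,
      fderiv ℝ (fun z => ∑ a, (GG ε x a p a z - GG ε x a a p z)) x (Pi.single r 1)
      = (∑ a, fderiv ℝ (GG ε x a p a) x (Pi.single r 1))
        - ∑ a, fderiv ℝ (GG ε x a a p) x (Pi.single r 1) := by
    intro p r
    rw [fderiv_fun_sum (fun a _ => (hGdiff a p a).fun_sub (hGdiff a a p))]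
    simp only [ContinuousLinearMap.coe_sum', Finset.sum_apply]
    rw [← Finset.sum_sub_distrib]
    refine Finset.sum_congr rfl fun a _ => ?_
    rw [fderiv_fun_sub (hGdiff a p a) (hGdiff a a p)]
    simp
  rw [hfe i, hfe j]
  simp only [hfe2, hsplit]
  rw [Finset.sum_sub_distrib]
  -- key symmetry: ∑ fderiv (GG a i a) x e_j = ∑ fderiv (GG a j a) x e_i
  have hkey : ∑ a, fderiv ℝ (GG ε x a i a) x (Pi.single j 1)
      = ∑ a, fderiv ℝ (GG ε x a j a) x (Pi.single i 1) := by
    simp only [hGderiv]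
    have : ∑ a, ∑ b, DS ε x i a b x * DS ε x j b a x
        = ∑ a, ∑ b, DS ε x j a b x * DS ε x i b a x := by
      rw [Finset.sum_comm]
      exact Finset.sum_congr rfl fun a _ => Finset.sum_congr rfl fun b _ => mul_comm _ _
    rw [Finset.sum_sub_distrib, Finset.sum_sub_distrib, this]
    congr 1
    exact Finset.sum_congr rfl fun a _ => hsym1 a
  linarith [hkey]
end

section
/- Let U ⊆ ℝⁿ be open and let ε : U × U → GL(n,ℝ) be a smooth map satisfying ε(x,x) = I and ε(y,z) · ε(x,y) = ε(x,z) for all x, y, z ∈ U, with Christoffel symbols Γ^i_{jk}(x) := [∂ε^i_k(x,y)/∂y^j]_{y=x}. Suppose ε is flat, i.e. for all (x,y) ∈ U × U and all indices i, j, k: ∂ε^i_j(x,y)/∂x^k + ∑_a (∂ε^i_j(x,y)/∂y^a) ε^a_k(x,y) is symmetric under interchange of j and k (its antisymmetrization in k, j vanishes). Then the curvature R₂ of Γ vanishes: for all x ∈ U and all indices i, j, k, r, ∂Γ^i_{kj}/∂x^r (x) + ∑_a Γ^a_{kr}(x) Γ^i_{aj}(x) − ∂Γ^i_{kr}/∂x^j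 (x) − ∑_a Γ^a_{kj}(x) Γ^i_{ar}(x) = 0. -/
/-- If a smooth splitting `ε` on an open set `U` is flat, i.e. the expression
`∂ε^i_j(x,y)/∂x^k + ∑_a (∂ε^i_j(x,y)/∂y^a) ε^a_k(x,y)` is symmetric in `j, k`
(vanishing of `R(ε)`), then the curvature
`R₂(ε)^i_{rj,k} = [∂Γ^i_{kj}/∂x^r + Γ^a_{kr} Γ^i_{aj}]_{[r,j]}` vanishes on `U`. -/
theorem stmt_16 {n : ℕ} (U : Set (Fin n → ℝ)) (hU : IsOpen U)
    (ε : (Fin n → ℝ) → (Fin n → ℝ) → Matrix (Fin n) (Fin n) ℝ)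
    (hsmooth : ∀ i k, ContDiffOn ℝ (⊤ : ℕ∞)
      (fun q : (Fin n → ℝ) × (Fin n → ℝ) => ε q.1 q.2 i k) (U ×ˢ U))
    (hunit : ∀ x ∈ U, ∀ y ∈ U, IsUnit (ε x y))
    (hId : ∀ x ∈ U, ε x x = 1)
    (hCoc : ∀ x ∈ U, ∀ y ∈ U, ∀ z ∈ U, ε y z * ε x y = ε x z)
    (hflat : ∀ x ∈ U, ∀ y ∈ U, ∀ i j k : Fin n,
      fderiv ℝ (fun z => ε z y i j) x (Pi.single k 1) +
          (∑ a, fderiv ℝ (fun w => ε x w i j) y (Pi.single a 1) * ε x y a k) =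
        fderiv ℝ (fun z => ε z y i k) x (Pi.single j 1) +
          (∑ a, fderiv ℝ (fun w => ε x w i k) y (Pi.single a 1) * ε x y a j)) :
    ∀ x ∈ U, ∀ i j k r : Fin n,
      fderiv ℝ (fun z => Gamma ε z i k j) x (Pi.single r 1) +
          (∑ a, Gamma ε x a k r * Gamma ε x i a j) -
        fderiv ℝ (fun z => Gamma ε z i k r) x (Pi.single j 1) -
          (∑ a, Gamma ε x a k j * Gamma ε x i a r) = 0 := by
  intro x hx i j k r
  classical
  have hUU : IsOpen (U ×ˢ U) := hU.prod hU
  have hxx : (x, x) ∈ U ×ˢ U := ⟨hx, hx⟩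
  -- local abbreviations
  set F : Fin n → Fin n → ((Fin n → ℝ) × (Fin n → ℝ)) → ℝ :=
    fun a b q => ε q.1 q.2 a b with hFdef
  set G : Fin n → Fin n → ((Fin n → ℝ) × (Fin n → ℝ)) →
      (((Fin n → ℝ) × (Fin n → ℝ)) →L[ℝ] ℝ) := fun a b => fderiv ℝ (F a b) with hGdef
  set H : Fin n → Fin n →
      (((Fin n → ℝ) × (Fin n → ℝ)) →L[ℝ] (((Fin n → ℝ) × (Fin n → ℝ)) →L[ℝ] ℝ)) :=
    fun a b => fderiv ℝ (G a b) (x, x) with hHdef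
  have hC : ∀ a b : Fin n, ∀ p ∈ U ×ˢ U, ContDiffAt ℝ 2 (F a b) p := fun a b p hp =>
    (((hsmooth a b).of_le (WithTop.coe_le_coe.mpr (le_top : (2 : ℕ∞) ≤ ⊤))).contDiffAt (hUU.mem_nhds hp))
  have hGF : ∀ a b : Fin n, ∀ p ∈ U ×ˢ U, HasFDerivAt (F a b) (G a b p) p := fun a b p hp =>
    (((hC a b p hp).differentiableAt (by norm_num))).hasFDerivAt
  have hHG : ∀ a b : Fin n, HasFDerivAt (G a b) (H a b) (x, x) := by
    intro a b
    have h1 : ContDiffAt ℝ 1 (G a b) (x, x) :=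
      (hC a b _ hxx).fderiv_right (by norm_num)
    exact (h1.differentiableAt one_ne_zero).hasFDerivAt
  have hsym : ∀ (a b : Fin n) (u v : (Fin n → ℝ) × (Fin n → ℝ)),
      H a b u v = H a b v u := by
    intro a b u v
    refine second_derivative_symmetric_of_eventually (f := F a b) ?_ (hHG a b) u v
    filter_upwards [hUU.mem_nhds hxx] with p hp using hGF a b p hp
  -- derivative with respect to the first variable
  have hL1 : ∀ a b : Fin n, ∀ x' ∈ U, ∀ y' ∈ U,
      HasFDerivAt (fun z => ε z y' a b)
        ((G a b (x', y')).comp (ContinuousLinearMap.inl ℝ (Fin n → ℝ) (Fin n → ℝ))) x' := by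
    intro a b x' hx' y' hy'
    exact (hGF a b (x', y') ⟨hx', hy'⟩).comp x' (hasFDerivAt_prodMk_left (𝕜 := ℝ) x' y')
  -- derivative with respect to the second variable
  have hL2 : ∀ a b : Fin n, ∀ x' ∈ U, ∀ y' ∈ U,
      HasFDerivAt (fun w => ε x' w a b)
        ((G a b (x', y')).comp (ContinuousLinearMap.inr ℝ (Fin n → ℝ) (Fin n → ℝ))) y' := by
    intro a b x' hx' y' hy'
    exact (hGF a b (x', y') ⟨hx', hy'⟩).comp y' (hasFDerivAt_prodMk_right x' y')
  -- Christoffel symbols in terms of `G`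
  have hGam : ∀ z ∈ U, ∀ a b c : Fin n,
      Gamma ε z a b c = G a c (z, z) (0, Pi.single b 1) := by
    intro z hz a b c
    have h := (hL2 a c z hz z hz).fderiv
    show fderiv ℝ (fun y => ε z y a c) z (Pi.single b 1) = _
    rw [h]
    simp
  -- derivative of the diagonal of `G`
  have hdiag : ∀ (a b : Fin n) (w : (Fin n → ℝ) × (Fin n → ℝ)) (v : Fin n → ℝ),
      fderiv ℝ (fun z => G a b (z, z) w) x v = H a b (v, v) w := by
    intro a b w v
    have hdg : HasFDerivAt (fun z : Fin n → ℝ => (z, z))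
        ((ContinuousLinearMap.id ℝ (Fin n → ℝ)).prod (ContinuousLinearMap.id ℝ (Fin n → ℝ))) x :=
      (hasFDerivAt_id x).prodMk (hasFDerivAt_id x)
    have h1' := HasFDerivAt.comp (f := fun z : Fin n → ℝ => (z, z)) x (hHG a b) hdg
    have h1 : HasFDerivAt (fun z : Fin n → ℝ => G a b (z, z))
        ((H a b).comp ((ContinuousLinearMap.id ℝ (Fin n → ℝ)).prod
          (ContinuousLinearMap.id ℝ (Fin n → ℝ)))) x := h1'
    have h2 := h1.clm_apply (hasFDerivAt_const w x)
    rw [h2.fderiv]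
    simp
  -- the `fderiv` appearing in the goal
  have hgoal : ∀ kk jj rr : Fin n,
      fderiv ℝ (fun z => Gamma ε z i kk jj) x (Pi.single rr 1)
        = H i jj (Pi.single rr 1, Pi.single rr 1) (0, Pi.single kk 1) := by
    intro kk jj rr
    have hev : (fun z => Gamma ε z i kk jj)
        =ᶠ[nhds x] (fun z => G i jj (z, z) (0, Pi.single kk 1)) := by
      filter_upwards [hU.mem_nhds hx] with z hz using hGam z hz i kk jj
    rw [hev.fderiv_eq, hdiag]
  -- the two sides of the flatness identity, as functions of `y`
  set S : Fin n → Fin n → (Fin n → ℝ) → ℝ := fun b c y =>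
    fderiv ℝ (fun z => ε z y i b) x (Pi.single c 1) +
      ∑ a, fderiv ℝ (fun w => ε x w i b) y (Pi.single a 1) * ε x y a c with hSdef
  -- derivative of each side at `y = x` in direction `Pi.single k 1`
  have key : ∀ b c : Fin n, fderiv ℝ (S b c) x (Pi.single k 1)
      = H i b (0, Pi.single k 1) (Pi.single c 1, 0)
        + H i b (0, Pi.single k 1) (0, Pi.single c 1)
        + ∑ a, Gamma ε x i a b * Gamma ε x a k c := by
    intro b c
    -- the `G`-form of the side
    have hev : S b c =ᶠ[nhds x] (fun y =>
        G i b (x, y) (Pi.single c 1, 0) +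
          ∑ a, G i b (x, y) (0, Pi.single a 1) * ε x y a c) := by
      filter_upwards [hU.mem_nhds hx] with y hy
      have h1 := (hL1 i b x hx y hy).fderiv
      have h2 := (hL2 i b x hx y hy).fderiv
      simp only [hSdef, h1, h2]
      simp
    rw [hev.fderiv_eq]
    have hyy : HasFDerivAt (fun y : Fin n → ℝ => ((x, y) : (Fin n → ℝ) × (Fin n → ℝ)))
        (ContinuousLinearMap.inr ℝ (Fin n → ℝ) (Fin n → ℝ)) x := hasFDerivAt_prodMk_right x x
    have hGy : HasFDerivAt (fun y : Fin n → ℝ => G i b (x, y))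
        ((H i b).comp (ContinuousLinearMap.inr ℝ (Fin n → ℝ) (Fin n → ℝ))) x :=
      (hHG i b).comp x hyy
    have t1 := hGy.clm_apply (hasFDerivAt_const ((Pi.single c 1 : Fin n → ℝ),
      (0 : Fin n → ℝ)) x)
    have t2 : ∀ a : Fin n, HasFDerivAt (fun y => G i b (x, y) (0, Pi.single a 1) * ε x y a c)
        (G i b (x, x) (0, Pi.single a 1) •
            ((G a c (x, x)).comp (ContinuousLinearMap.inr ℝ (Fin n → ℝ) (Fin n → ℝ)))
          + ε x x a c • ((G i b (x, x)).comp
              (0 : (Fin n → ℝ) →L[ℝ] ((Fin n → ℝ) × (Fin n → ℝ))) +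
            ((H i b).comp (ContinuousLinearMap.inr ℝ (Fin n → ℝ) (Fin n → ℝ))).flip
              (0, Pi.single a 1))) x := by
      intro a
      have t2a := hGy.clm_apply (hasFDerivAt_const ((0 : Fin n → ℝ),
        (Pi.single a 1 : Fin n → ℝ)) x)
      have t3a : HasFDerivAt (fun y => ε x y a c)
          ((G a c (x, x)).comp (ContinuousLinearMap.inr ℝ (Fin n → ℝ) (Fin n → ℝ))) x :=
        (hGF a c (x, x) hxx).comp x hyy
      exact t2a.mul t3a
    have tsum := HasFDerivAt.fun_sum (fun a (_ : a ∈ Finset.univ) => t2 a)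
    have total := t1.fun_add tsum
    rw [total.fderiv]
    have hone : ∀ a : Fin n, ε x x a c = if a = c then (1 : ℝ) else 0 := by
      intro a; rw [hId x hx]; exact Matrix.one_apply
    simp only [ContinuousLinearMap.add_apply, ContinuousLinearMap.coe_sum',
      Finset.sum_apply, ContinuousLinearMap.comp_apply, ContinuousLinearMap.flip_apply,
      ContinuousLinearMap.smul_apply, ContinuousLinearMap.zero_apply,
      ContinuousLinearMap.comp_zero, ContinuousLinearMap.inr_apply, smul_eq_mul, hone,
      ite_mul, one_mul, zero_mul, mul_zero, add_zero, zero_add,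
      ContinuousLinearMap.map_zero]
    rw [Finset.sum_add_distrib, Finset.sum_ite_eq' Finset.univ c
      (fun a => H i b (0, Pi.single k 1) (0, Pi.single a 1))]
    simp only [Finset.mem_univ, if_true]
    have hGamval : ∀ a : Fin n, G i b (x, x) (0, Pi.single a 1) = Gamma ε x i a b :=
      fun a => (hGam x hx i a b).symm
    have hGamval2 : ∀ a : Fin n, G a c (x, x) (0, Pi.single k 1) = Gamma ε x a k c :=
      fun a => (hGam x hx a k c).symm
    simp only [hGamval, hGamval2]
    ring
  -- flatness: the two sides agree near x, hence their derivatives agree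
  have hSeq : fderiv ℝ (S j r) x (Pi.single k 1) = fderiv ℝ (S r j) x (Pi.single k 1) := by
    have hev : S j r =ᶠ[nhds x] S r j := by
      filter_upwards [hU.mem_nhds hx] with y hy
      exact hflat x hx y hy i j r
    rw [hev.fderiv_eq]
  rw [key, key] at hSeq
  -- rewrite the goal using `hgoal` and expand bilinearity + symmetry
  rw [hgoal k j r, hgoal k r j]
  have hsplit : ∀ b cc rr : Fin n,
      H i b (Pi.single rr 1, Pi.single rr 1) (0, Pi.single cc 1)
        = H i b (0, Pi.single cc 1) (Pi.single rr 1, 0)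
          + H i b (0, Pi.single cc 1) (0, Pi.single rr 1) := by
    intro b cc rr
    have : ((Pi.single rr 1 : Fin n → ℝ), (Pi.single rr 1 : Fin n → ℝ))
        = ((Pi.single rr 1 : Fin n → ℝ), (0 : Fin n → ℝ))
          + ((0 : Fin n → ℝ), (Pi.single rr 1 : Fin n → ℝ)) := by
      simp [Prod.ext_iff]
    rw [this, map_add, ContinuousLinearMap.add_apply, hsym i b _ (0, Pi.single cc 1),
      hsym i b _ (0, Pi.single cc 1)]
  rw [hsplit, hsplit]
  have hcomm1 : ∑ a, Gamma ε x a k r * Gamma ε x i a j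
      = ∑ a, Gamma ε x i a j * Gamma ε x a k r :=
    Finset.sum_congr rfl (fun a _ => mul_comm _ _)
  have hcomm2 : ∑ a, Gamma ε x a k j * Gamma ε x i a r
      = ∑ a, Gamma ε x i a r * Gamma ε x a k j :=
    Finset.sum_congr rfl (fun a _ => mul_comm _ _)
  rw [hcomm1, hcomm2]
  linarith [hSeq]
end
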